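/- arXiv:0708.1017 — 10 statements merged into one kernel-verified Lean document; each statement's English description precedes it below -/
import Mathlib

section
/- Under the stated commutation relations, for every element u of A the following (pointwise) Pestov identity holds: 2·H(u)·V(F(u)) = (F(u))² + (H(u))² − k·(V(u))² + F(H(u)·V(u)) + V(λ)·H(u)·V(u) − H(F(u)·V(u)) − V(c)·F(u)·V(u) + V(H(u)·F(u)). -/
/-- the pointwise Pestov identity, derived purely from the
commutation relations of the derivations `F`, `H`, `V` on a commutative
`ℝ`-algebra `A` (modeling `C^∞(SM)`). -/
theorem pestov_identity_pointwise
    (A : Type*) [CommRing A] [Algebra ℝ A]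
    (F H V : Derivation ℝ A A) (lam c k : A)
    (hVF : ⁅V, F⁆ = H + (V lam - c) • V)
    (hVH : ⁅V, H⁆ = -F + (V c + lam) • V)
    (hFH : ⁅F, H⁆ = -(lam • F) - c • H + k • V) :
    ∀ u : A,
      2 * (H u * V (F u)) =
        (F u) ^ 2 + (H u) ^ 2 - k * (V u) ^ 2
          + F (H u * V u) + V lam * (H u * V u)
          - H (F u * V u) - V c * (F u * V u)
          + V (H u * F u) := by
  intro u
  have h1 := congrArg (fun D : Derivation ℝ A A => D u) hVF
  have h2 := congrArg (fun D : Derivation ℝ A A => D u) hVH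
  have h3 := congrArg (fun D : Derivation ℝ A A => D u) hFH
  simp only [Derivation.commutator_apply, Derivation.add_apply, Derivation.neg_apply,
    Derivation.sub_apply, Derivation.smul_apply, smul_eq_mul] at h1 h2 h3
  simp only [Derivation.leibniz, smul_eq_mul]
  linear_combination (H u) * h1 - (F u) * h2 - (V u) * h3
end

section
/- With F = X + λ·V, H_c = H + c·V and Ǩ = K − H_c(λ) + λ², the modified basis satisfies the commutation relations: [V,F] = H_c + (V(λ) − c)·V, [V,H_c] = −F + (V(c) + λ)·V, and [F,H_c] = −λ·F − c·H_c + (F(c) + c² + Ǩ)·V. -/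
/-- the commutation relations of the modified basis
`F = X + λ·V`, `H_c = H + c·V` on a surface, where `X, H, V` satisfy the
structure equations `[V,X] = H`, `[H,V] = X`, `[X,H] = K·V`. -/
theorem modified_basis_commutation_relations
    (A : Type*) [CommRing A] [Algebra ℝ A]
    (X H V : Derivation ℝ A A) (K : A)
    (hVX : ⁅V, X⁆ = H) (hHV : ⁅H, V⁆ = X) (hXH : ⁅X, H⁆ = K • V)
    (lam c : A)
    (F Hc : Derivation ℝ A A) (Kc : A)
    (hF : F = X + lam • V) (hHc : Hc = H + c • V)
    (hKc : Kc = K - Hc lam + lam ^ 2) :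
    ⁅V, F⁆ = Hc + (V lam - c) • V ∧
    ⁅V, Hc⁆ = -F + (V c + lam) • V ∧
    ⁅F, Hc⁆ = -(lam • F) - c • Hc + (F c + c ^ 2 + Kc) • V := by
  have h1 : ∀ a, V (X a) - X (V a) = H a := fun a => by
    rw [← Derivation.commutator_apply, hVX]
  have h2 : ∀ a, H (V a) - V (H a) = X a := fun a => by
    rw [← Derivation.commutator_apply, hHV]
  have h3 : ∀ a, X (H a) - H (X a) = K * V a := fun a => by
    rw [← Derivation.commutator_apply, hXH]; simp
  subst hF hHc hKc
  refine ⟨?_, ?_, ?_⟩ <;> ext x <;>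
    simp only [Derivation.commutator_apply, Derivation.add_apply, Derivation.smul_apply,
      Derivation.neg_apply, Derivation.sub_apply, map_add, map_mul, map_sub, map_pow,
      Derivation.leibniz, smul_eq_mul, Derivation.leibniz_pow] <;>
    ring_nf
  · linear_combination h1 x
  · linear_combination -h2 x
  · linear_combination h3 x + lam * (-(h2 x)) + c * (-(h1 x))
end

section
/- For every u ∈ A, the integrated Pestov identity holds: 2·I(H_c(u)·V(F(u))) = I((F(u))²) + I((H_c(u))²) − I((F(c) + c² + Ǩ)·(V(u))²). -/
/-- the integrated Pestov identity. Here `I : A → ℝ` is an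
`ℝ`-linear functional vanishing on `X`-, `H`- and `V`-derivatives,
modeling integration over `SM` against the Liouville measure. -/
theorem pestov_identity_integrated
    (A : Type*) [CommRing A] [Algebra ℝ A]
    (X H V : Derivation ℝ A A) (K : A)
    (hVX : ⁅V, X⁆ = H) (hHV : ⁅H, V⁆ = X) (hXH : ⁅X, H⁆ = K • V)
    (lam c : A)
    (F Hc : Derivation ℝ A A) (Kc : A)
    (hF : F = X + lam • V) (hHc : Hc = H + c • V)
    (hKc : Kc = K - Hc lam + lam ^ 2)
    (I : A →ₗ[ℝ] ℝ)
    (hIX : ∀ a : A, I (X a) = 0) (hIH : ∀ a : A, I (H a) = 0)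
    (hIV : ∀ a : A, I (V a) = 0) :
    ∀ u : A,
      2 * I (Hc u * V (F u)) =
        I ((F u) ^ 2) + I ((Hc u) ^ 2) - I ((F c + c ^ 2 + Kc) * (V u) ^ 2) := by
  subst hF hHc hKc
  intro u
  have e1 : ∀ a : A, V (X a) = X (V a) + H a := by
    intro a
    have h := congrArg (fun D : Derivation ℝ A A => D a) hVX
    simp only [Derivation.commutator_apply] at h
    linear_combination h
  have e2 : ∀ a : A, V (H a) = H (V a) - X a := by
    intro a
    have h := congrArg (fun D : Derivation ℝ A A => D a) hHV
    simp only [Derivation.commutator_apply] at h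
    linear_combination -h
  have e3 : ∀ a : A, X (H a) = H (X a) + K * V a := by
    intro a
    have h := congrArg (fun D : Derivation ℝ A A => D a) hXH
    simp only [Derivation.commutator_apply, Derivation.smul_apply, smul_eq_mul] at h
    linear_combination h
  set Fd : Derivation ℝ A A := X + lam • V with hFd
  set Hcd : Derivation ℝ A A := H + c • V with hHcd
  have key :
      (Fd u) ^ 2 + (Hcd u) ^ 2
        - ((Fd c + c ^ 2 + (K - Hcd lam + lam ^ 2)) * (V u) ^ 2)
        - 2 * (Hcd u * V (Fd u))
      = X (-(H u * V u) - c * (V u * V u))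
        + H (X u * V u + lam * (V u * V u))
        + V (-(X u * H u) - lam * (H u * V u) - lam * (H u * V u) - lam * (c * (V u * V u))) := by
    simp only [hFd, hHcd, Derivation.add_apply, Derivation.smul_apply, smul_eq_mul,
      map_add, map_sub, map_neg, Derivation.leibniz, e1, e2, e3]
    ring
  have hI0 : I ((Fd u) ^ 2 + (Hcd u) ^ 2
        - ((Fd c + c ^ 2 + (K - Hcd lam + lam ^ 2)) * (V u) ^ 2)
        - 2 * (Hcd u * V (Fd u))) = 0 := by
    rw [key]
    simp only [map_add, hIX u, hIH u, hIV u, hIX, hIH, hIV]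
    norm_num
  have expand : ((Fd u) ^ 2 + (Hcd u) ^ 2
        - ((Fd c + c ^ 2 + (K - Hcd lam + lam ^ 2)) * (V u) ^ 2)
        - 2 * (Hcd u * V (Fd u)))
      = ((Fd u) ^ 2 + (Hcd u) ^ 2
          - ((Fd c + c ^ 2 + (K - Hcd lam + lam ^ 2)) * (V u) ^ 2))
        - ((Hcd u * V (Fd u)) + (Hcd u * V (Fd u))) := by ring
  rw [expand, map_sub, map_sub, map_add, map_add] at hI0
  linarith
end

section
/- If moreover c satisfies the Riccati equation F(c) + c² + Ǩ = 0, then for every u ∈ A: 2·I(H_c(u)·V(F(u))) = I((F(u))²) + I((H_c(u))²). -/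
/-- the integrated Pestov identity when `c` satisfies the
Riccati equation `F(c) + c² + Ǩ = 0` exactly (as the functions induced by
the weak stable/unstable bundles of an Anosov thermostat do). -/
theorem pestov_identity_riccati
    (A : Type*) [CommRing A] [Algebra ℝ A]
    (X H V : Derivation ℝ A A) (K : A)
    (hVX : ⁅V, X⁆ = H) (hHV : ⁅H, V⁆ = X) (hXH : ⁅X, H⁆ = K • V)
    (lam c : A)
    (F Hc : Derivation ℝ A A) (Kc : A)
    (hF : F = X + lam • V) (hHc : Hc = H + c • V)
    (hKc : Kc = K - Hc lam + lam ^ 2)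
    (I : A →ₗ[ℝ] ℝ)
    (hIX : ∀ a : A, I (X a) = 0) (hIH : ∀ a : A, I (H a) = 0)
    (hIV : ∀ a : A, I (V a) = 0)
    (hRiccati : F c + c ^ 2 + Kc = 0) :
    ∀ u : A,
      2 * I (Hc u * V (F u)) = I ((F u) ^ 2) + I ((Hc u) ^ 2) := by
  -- pointwise Leibniz rule
  have lb : ∀ (D : Derivation ℝ A A) (a b : A), D (a * b) = a * D b + b * D a := by
    intro D a b; rw [Derivation.leibniz, smul_eq_mul, smul_eq_mul]
  -- pointwise structure equations
  have cVX : ∀ a : A, V (X a) - X (V a) = H a := by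
    intro a; rw [← hVX, Derivation.commutator_apply]
  have cHV : ∀ a : A, H (V a) - V (H a) = X a := by
    intro a; rw [← hHV, Derivation.commutator_apply]
  have cXH : ∀ a : A, X (H a) - H (X a) = K * V a := by
    intro a; rw [← smul_eq_mul, ← Derivation.smul_apply, ← hXH, Derivation.commutator_apply]
  -- pointwise formulas for F and Hc
  have hFa : ∀ a : A, F a = X a + lam * V a := by
    intro a; rw [hF, Derivation.add_apply, Derivation.smul_apply, smul_eq_mul]
  have hHca : ∀ a : A, Hc a = H a + c * V a := by
    intro a; rw [hHc, Derivation.add_apply, Derivation.smul_apply, smul_eq_mul]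
  -- expanded Riccati equation
  have hR' : (X c + lam * V c) + c ^ 2 + (K - (H lam + c * V lam) + lam ^ 2) = 0 := by
    rw [← hFa c, ← hHca lam, ← hKc]; exact hRiccati
  -- integration by parts for V
  have ibpV : ∀ a b : A, I (a * V b) + I (b * V a) = 0 := by
    intro a b
    have h := hIV (a * b)
    rw [lb, map_add] at h
    linarith
  -- divergences of F and Hc
  have divF : ∀ w : A, I (F w) = - I (V lam * w) := by
    intro w
    have h1 := hIV (lam * w)
    rw [lb, map_add, mul_comm w (V lam)] at h1
    rw [hFa w, map_add, hIX]
    linarith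
  have divHc : ∀ w : A, I (Hc w) = - I (V c * w) := by
    intro w
    have h1 := hIV (c * w)
    rw [lb, map_add, mul_comm w (V c)] at h1
    rw [hHca w, map_add, hIH]
    linarith
  intro u
  -- pointwise identity (i): V (F u) = F (V u) + Hc u + (V lam - c) * V u
  have id1A : V (F u) = F (V u) + Hc u + (V lam - c) * V u := by
    rw [hFa u, hFa (V u), hHca u, map_add, lb V lam (V u)]
    linear_combination cVX u
  -- pointwise identity (ii), using the Riccati equation:
  -- [F, Hc] = - lam • F - c • Hc
  have id2A : F (Hc u) = Hc (F u) - lam * F u - c * Hc u := by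
    simp only [hFa, hHca, map_add, lb]
    linear_combination cXH u - c * cVX u - lam * cHV u + V u * hR'
  -- pointwise identity (iii): Hc (V u) = V (Hc u) + F u - (lam + V c) * V u
  have id3A : Hc (V u) = V (Hc u) + F u - (lam + V c) * V u := by
    rw [hHca (V u), hHca u, hFa u, map_add, lb V c (V u)]
    linear_combination cHV u
  -- the chain of integrated identities
  have e1 : I (Hc u * V (F u)) = I (Hc u * F (V u)) + I (Hc u ^ 2)
      + (I (V lam * (Hc u * V u)) - I (c * (Hc u * V u))) := by
    have h : Hc u * V (F u) = Hc u * F (V u) + Hc u ^ 2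
        + (V lam * (Hc u * V u) - c * (Hc u * V u)) := by rw [id1A]; ring
    rw [h, map_add, map_add, map_sub]
  have e2 : I (Hc u * F (V u)) + I (V u * F (Hc u)) = - I (V lam * (Hc u * V u)) := by
    have h := divF (Hc u * V u)
    rw [lb F (Hc u) (V u), map_add] at h
    linarith
  have e3 : I (V u * F (Hc u)) = I (V u * Hc (F u))
      - (I (lam * (F u * V u)) + I (c * (Hc u * V u))) := by
    have h : V u * F (Hc u) = V u * Hc (F u)
        - (lam * (F u * V u) + c * (Hc u * V u)) := by rw [id2A]; ring
    rw [h, map_sub, map_add]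
  have e4 : I (F u * Hc (V u)) + I (V u * Hc (F u)) = - I (V c * (F u * V u)) := by
    have h := divHc (F u * V u)
    rw [lb Hc (F u) (V u), map_add] at h
    linarith
  have e5 : I (F u * Hc (V u)) = I (F u * V (Hc u)) + I (F u ^ 2)
      - (I (lam * (F u * V u)) + I (V c * (F u * V u))) := by
    have h : F u * Hc (V u) = F u * V (Hc u) + F u ^ 2
        - (lam * (F u * V u) + V c * (F u * V u)) := by rw [id3A]; ring
    rw [h, map_sub, map_add, map_add]
  have e6 := ibpV (F u) (Hc u)
  linarith
end

section
/- Suppose u, p ∈ A satisfy F(u) = p and V(V(V(p))) + 4·V(p) = 0, and set φ = V(V(u)) + u. Then V(F(φ)) = −2·H_c(φ) + 2·(θ + c)·V(φ). -/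
/-- for a pure Gaussian thermostat (`λ = V(θ)` with
`V(V(θ)) = −θ`), if `F(u) = p` with `V³p + 4Vp = 0` and `φ = V²u + u`, then
`V(F(φ)) = −2·H_c(φ) + 2·(θ + c)·V(φ)`. -/
theorem VFphi_identity
    (A : Type*) [CommRing A] [Algebra ℝ A]
    (X H V : Derivation ℝ A A) (K : A)
    (hVX : ⁅V, X⁆ = H) (hHV : ⁅H, V⁆ = X) (hXH : ⁅X, H⁆ = K • V)
    (θ : A) (hθ : V (V θ) = -θ)
    (lam c : A) (hlam : lam = V θ)
    (F Hc : Derivation ℝ A A)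
    (hF : F = X + lam • V) (hHc : Hc = H + c • V)
    (u p : A) (hu : F u = p) (hp : V (V (V p)) + 4 * V p = 0)
    (φ : A) (hφ : φ = V (V u) + u) :
    V (F φ) = -2 * Hc φ + 2 * ((θ + c) * V φ) := by
  subst hlam hF hHc hφ
  subst hu
  have r1 : ∀ a, V (X a) = X (V a) + H a := by
    intro a
    have := congrArg (fun D : Derivation ℝ A A => D a) hVX
    simp [Derivation.commutator_apply] at this
    linear_combination this
  have r2 : ∀ a, V (H a) = H (V a) - X a := by
    intro a
    have := congrArg (fun D : Derivation ℝ A A => D a) hHV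
    simp [Derivation.commutator_apply] at this
    linear_combination -this
  simp only [Derivation.add_apply, Derivation.smul_apply, smul_eq_mul, map_add, map_mul,
    Derivation.leibniz, r1, r2, hθ, map_neg, map_sub, mul_neg, neg_mul] at hp ⊢
  ring_nf at hp ⊢
  linear_combination hp
end

section
/- Suppose u, p ∈ A satisfy F(u) = p and V(V(V(p))) + 4·V(p) = 0, set φ = V(V(u)) + u and R_c = F(θ + c) + (θ + 2c)·(θ + c) + K. Then the integrated Uhlmann–Pestov identity holds: I((F(φ))²) + I((H_c(φ))²) + I((2·H_c(φ) − (θ + c)·V(φ))²) = I(R_c·(V(φ))²). -/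
/-! In the frame `F = X + λ V`, `B = H - θ V`, `V` of the thermostat, `ad V` rotates `F` into `B`
and `B` into `-F`, `[F, B] = -λ F + θ B + K V`, and `∫ F f = ∫ θ f`, `∫ B f = ∫ λ f`. This is
exactly what the classical Pestov identity `2 ⟨B ψ, V F ψ⟩ = ‖F ψ‖² + ‖B ψ‖² - ⟨K V ψ, V ψ⟩`
needs. For `φ = (V² + 1) u` the rotation gives `V F φ + 2 B φ = V (V² + 4) F u = 0`; substituting
`V F φ = -2 B φ` and `H_c φ = B φ + (θ + c) V φ` into the Pestov identity and integrating
`F (θ + c)` by parts yields the claim. -/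

section Frame

variable {A : Type*} [CommRing A] [Algebra ℝ A] {F B V : Derivation ℝ A A}

theorem apply_apply_eq_of_commutator_eq {D E G : Derivation ℝ A A} (h : ⁅D, E⁆ = G) (x : A) :
    E (D x) = D (E x) - G x := by
  rw [← h, Derivation.commutator_apply]; ring

theorem V_F_add_two_B_V_sq_add_one (hVF : ⁅V, F⁆ = B) (hVB : ⁅V, B⁆ = -F) (u : A) :
    V (F (V (V u) + u)) + 2 * B (V (V u) + u) = V (V (V (F u))) + 4 * V (F u) := by
  simp only [map_add, map_sub, map_neg, apply_apply_eq_of_commutator_eq hVF,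
    apply_apply_eq_of_commutator_eq hVB, Derivation.neg_apply]
  ring

theorem pestov_identity (K α β : A) (hVF : ⁅V, F⁆ = B) (hVB : ⁅V, B⁆ = -F)
    (hFB : ⁅F, B⁆ = -α • F + β • B + K • V) (I : A →ₗ[ℝ] ℝ)
    (hIF : ∀ f, I (F f) = I (β * f)) (hIB : ∀ f, I (B f) = I (α * f)) (hIV : ∀ f, I (V f) = 0)
    (ψ : A) :
    2 * I (B ψ * V (F ψ)) = I (F ψ ^ 2) + I (B ψ ^ 2) - I (K * V ψ ^ 2) := by
  have hP : F ψ ^ 2 + B ψ ^ 2 - K * V ψ ^ 2 - 2 * (B ψ * V (F ψ)) =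
      (B (V ψ * F ψ) - α * (V ψ * F ψ)) - (F (B ψ * V ψ) - β * (B ψ * V ψ)) - V (F ψ * B ψ) := by
    have hFBψ := apply_apply_eq_of_commutator_eq hFB ψ
    simp only [Derivation.add_apply, Derivation.smul_apply, smul_eq_mul] at hFBψ
    simp only [Derivation.leibniz, smul_eq_mul, apply_apply_eq_of_commutator_eq hVF,
      apply_apply_eq_of_commutator_eq hVB, Derivation.neg_apply, hFBψ]
    ring
  have hIP := congrArg I hP
  simp only [two_mul, map_sub, map_add, hIF, hIB, hIV, sub_self] at hIP
  linarith

theorem pestov_identity_of_V_F_add_two_B_eq_zero (K α β : A) (hVF : ⁅V, F⁆ = B)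
    (hVB : ⁅V, B⁆ = -F) (hFB : ⁅F, B⁆ = -α • F + β • B + K • V) (I : A →ₗ[ℝ] ℝ)
    (hIF : ∀ f, I (F f) = I (β * f)) (hIB : ∀ f, I (B f) = I (α * f)) (hIV : ∀ f, I (V f) = 0)
    (φ a : A) (hW : V (F φ) + 2 * B φ = 0) :
    I (F φ ^ 2) + I ((B φ + a * V φ) ^ 2) + I ((2 * (B φ + a * V φ) - a * V φ) ^ 2) =
      I ((F a + (2 * a - β) * a + K) * V φ ^ 2) := by
  have hPestov := pestov_identity K α β hVF hVB hFB I hIF hIB hIV φ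
  have hD : F φ ^ 2 + (B φ + a * V φ) ^ 2 + (2 * (B φ + a * V φ) - a * V φ) ^ 2
      - (F a + (2 * a - β) * a + K) * V φ ^ 2 =
      (F φ ^ 2 + B φ ^ 2 - K * V φ ^ 2 - (B φ * V (F φ) + B φ * V (F φ)))
      - (F (a * V φ ^ 2) - β * (a * V φ ^ 2)) := by
    rw [Derivation.leibniz, Derivation.leibniz_pow, apply_apply_eq_of_commutator_eq hVF]
    simp only [smul_eq_mul, nsmul_eq_mul]
    linear_combination (2 * (B φ + a * V φ)) * hW
  rw [← sub_eq_zero]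
  calc _ = I (F φ ^ 2 + (B φ + a * V φ) ^ 2 + (2 * (B φ + a * V φ) - a * V φ) ^ 2
      - (F a + (2 * a - β) * a + K) * V φ ^ 2) := by simp only [map_add, map_sub]
    _ = 0 := by
      rw [hD]
      simp only [map_add, map_sub, hIF, sub_self, sub_zero]
      linarith

end Frame

section Thermostat

variable {A : Type*} [CommRing A] [Algebra ℝ A] {X H V : Derivation ℝ A A} {K θ : A}

theorem thermostat_commutator_V_F (hVX : ⁅V, X⁆ = H) (hθ : V (V θ) = -θ) :
    ⁅V, X + V θ • V⁆ = H - θ • V := by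
  ext x
  simp only [Derivation.commutator_apply, Derivation.add_apply, Derivation.sub_apply,
    Derivation.smul_apply, smul_eq_mul, map_add, Derivation.leibniz,
    apply_apply_eq_of_commutator_eq hVX, hθ]
  ring

theorem thermostat_commutator_V_B (hHV : ⁅H, V⁆ = X) :
    ⁅V, H - θ • V⁆ = -(X + V θ • V) := by
  ext x
  simp only [Derivation.commutator_apply, Derivation.add_apply, Derivation.sub_apply,
    Derivation.neg_apply, Derivation.smul_apply, smul_eq_mul, map_sub, Derivation.leibniz]
  linear_combination apply_apply_eq_of_commutator_eq hHV x

theorem thermostat_commutator_F_B (hVX : ⁅V, X⁆ = H) (hHV : ⁅H, V⁆ = X) (hXH : ⁅X, H⁆ = K • V)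
    (hθ : V (V θ) = -θ) (hdiv : X θ + H (V θ) = 0) :
    ⁅X + V θ • V, H - θ • V⁆ = -V θ • (X + V θ • V) + θ • (H - θ • V) + K • V := by
  ext x
  have hXHx := apply_apply_eq_of_commutator_eq hXH x
  simp only [Derivation.smul_apply, smul_eq_mul] at hXHx
  simp only [Derivation.commutator_apply, Derivation.add_apply, Derivation.sub_apply,
    Derivation.smul_apply, smul_eq_mul, map_add, map_sub, Derivation.leibniz, hθ]
  linear_combination -hXHx + V θ * apply_apply_eq_of_commutator_eq hHV x
    - θ * apply_apply_eq_of_commutator_eq hVX x - V x * hdiv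

theorem thermostat_integral_F_apply (I : A →ₗ[ℝ] ℝ) (hIX : ∀ a, I (X a) = 0)
    (hIV : ∀ a, I (V a) = 0) (hθ : V (V θ) = -θ) (f : A) :
    I ((X + V θ • V) f) = I (θ * f) := by
  have h := hIV (V θ * f)
  rw [Derivation.leibniz, hθ, smul_eq_mul, smul_eq_mul, map_add, mul_neg, map_neg, mul_comm f] at h
  simp only [Derivation.add_apply, Derivation.smul_apply, smul_eq_mul, map_add, hIX]
  linear_combination h

theorem thermostat_integral_B_apply (I : A →ₗ[ℝ] ℝ) (hIH : ∀ a, I (H a) = 0)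
    (hIV : ∀ a, I (V a) = 0) (f : A) :
    I ((H - θ • V) f) = I (V θ * f) := by
  have h := hIV (θ * f)
  rw [Derivation.leibniz, smul_eq_mul, smul_eq_mul, map_add, mul_comm f] at h
  simp only [Derivation.sub_apply, Derivation.smul_apply, smul_eq_mul, map_sub, hIH]
  linear_combination -h

end Thermostat

/-- the integrated Uhlmann–Pestov identity for a pure Gaussian
thermostat with divergence-free external field. -/
theorem uhlmann_pestov_identity
    (A : Type*) [CommRing A] [Algebra ℝ A]
    (X H V : Derivation ℝ A A) (K : A)
    (hVX : ⁅V, X⁆ = H) (hHV : ⁅H, V⁆ = X) (hXH : ⁅X, H⁆ = K • V)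
    (θ : A) (hθ : V (V θ) = -θ) (hdiv : X θ + H (V θ) = 0)
    (lam c : A) (hlam : lam = V θ)
    (F Hc : Derivation ℝ A A)
    (hF : F = X + lam • V) (hHc : Hc = H + c • V)
    (I : A →ₗ[ℝ] ℝ)
    (hIX : ∀ a : A, I (X a) = 0) (hIH : ∀ a : A, I (H a) = 0)
    (hIV : ∀ a : A, I (V a) = 0)
    (u p : A) (hu : F u = p) (hp : V (V (V p)) + 4 * V p = 0)
    (φ : A) (hφ : φ = V (V u) + u)
    (Rc : A) (hRc : Rc = F (θ + c) + (θ + 2 * c) * (θ + c) + K) :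
    I ((F φ) ^ 2) + I ((Hc φ) ^ 2) + I ((2 * Hc φ - (θ + c) * V φ) ^ 2) =
      I (Rc * (V φ) ^ 2) := by
  subst hlam hHc hRc
  have hVF : ⁅V, F⁆ = H - θ • V := hF ▸ thermostat_commutator_V_F hVX hθ
  have hVB : ⁅V, H - θ • V⁆ = -F := hF ▸ thermostat_commutator_V_B hHV
  have hFB : ⁅F, H - θ • V⁆ = -V θ • F + θ • (H - θ • V) + K • V :=
    hF ▸ thermostat_commutator_F_B hVX hHV hXH hθ hdiv
  have hIF : ∀ f, I (F f) = I (θ * f) := hF ▸ thermostat_integral_F_apply I hIX hIV hθ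
  have hW : V (F φ) + 2 * (H - θ • V) φ = 0 := by
    rw [hφ, V_F_add_two_B_V_sq_add_one hVF hVB, hu, hp]
  have hHcφ : (H + c • V) φ = (H - θ • V) φ + (θ + c) * V φ := by
    simp only [Derivation.add_apply, Derivation.sub_apply, Derivation.smul_apply, smul_eq_mul]
    ring
  rw [hHcφ, show θ + 2 * c = 2 * (θ + c) - θ by ring]
  exact pestov_identity_of_V_F_add_two_B_eq_zero K (V θ) θ hVF hVB hFB I hIF
    (thermostat_integral_B_apply I hIH hIV) hIV φ (θ + c) hW
end

section
/- Suppose c_s, c_u ∈ A satisfy the pure-thermostat Riccati equations F(θ + c_s) + c_s·(c_s + θ) + K = 0 and F(θ + c_u) + c_u·(c_u + θ) + K = 0. Then, with c = (c_s + c_u)/2, one has R_c = (θ + c_s)·(θ + c_u), where R_c = F(θ + c) + (θ + 2c)·(θ + c) + K. -/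
/-- if `c_s` and `c_u` satisfy the pure-thermostat Riccati
equations, then with `c = (c_s + c_u)/2` the Riccati-type quantity
`R_c = F(θ + c) + (θ + 2c)(θ + c) + K` factors as `(θ + c_s)(θ + c_u)`. -/
theorem riccati_average_factorization
    (A : Type*) [CommRing A] [Algebra ℝ A]
    (F : Derivation ℝ A A) (θ K : A)
    (cs cu : A)
    (hcs : F (θ + cs) + cs * (cs + θ) + K = 0)
    (hcu : F (θ + cu) + cu * (cu + θ) + K = 0)
    (c : A) (hc : c = ((2 : ℝ)⁻¹) • (cs + cu))
    (Rc : A) (hRc : Rc = F (θ + c) + (θ + 2 * c) * (θ + c) + K) :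
    Rc = (θ + cs) * (θ + cu) := by
  set e : A := algebraMap ℝ A (2⁻¹) with he_def
  have he : 2 * e = 1 := by
    rw [he_def, show (2 : A) = algebraMap ℝ A 2 from (map_ofNat _ 2).symm, ← map_mul]
    norm_num
  have hsm : ∀ x : A, ((2 : ℝ)⁻¹) • x = e * x := fun x => Algebra.smul_def _ _
  subst hc
  rw [map_add, F.map_smul, hsm, hsm, map_add] at hRc
  rw [map_add] at hcs hcu
  rw [hRc]
  linear_combination e * hcs + e * hcu +
    (-(F θ + K) + (cs + cu) * θ + e * (cs * cs + cu * cu) + (2 * e + 1) * (cs * cu)) * he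
end

section
/- In particular, if in addition R_c = (θ + c_s)·(θ + c_u) and I(R_c·w²) ≤ 0 for all w ∈ A, then for u, p, φ as in the Uhlmann–Pestov identity one concludes I((F(φ))²) + I((H_c(φ))²) + I((2·H_c(φ) − (θ + c)·V(φ))²) ≤ 0. -/
/-- if `R_c = (θ + c_s)(θ + c_u)` and `I(R_c · w²) ≤ 0` for all
`w` (modeling the pointwise negativity of `(θ + c_s)(θ + c_u)`), then the
left-hand side of the Uhlmann–Pestov identity is nonpositive. -/
theorem uhlmann_pestov_nonpositive
    (A : Type*) [CommRing A] [Algebra ℝ A]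
    (X H V : Derivation ℝ A A) (K : A)
    (hVX : ⁅V, X⁆ = H) (hHV : ⁅H, V⁆ = X) (hXH : ⁅X, H⁆ = K • V)
    (θ : A) (hθ : V (V θ) = -θ) (hdiv : X θ + H (V θ) = 0)
    (lam c : A) (hlam : lam = V θ)
    (F Hc : Derivation ℝ A A)
    (hF : F = X + lam • V) (hHc : Hc = H + c • V)
    (I : A →ₗ[ℝ] ℝ)
    (hIX : ∀ a : A, I (X a) = 0) (hIH : ∀ a : A, I (H a) = 0)
    (hIV : ∀ a : A, I (V a) = 0)
    (u p : A) (hu : F u = p) (hp : V (V (V p)) + 4 * V p = 0)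
    (φ : A) (hφ : φ = V (V u) + u)
    (Rc : A) (hRcdef : Rc = F (θ + c) + (θ + 2 * c) * (θ + c) + K)
    (cs cu : A) (hRc : Rc = (θ + cs) * (θ + cu))
    (hneg : ∀ w : A, I (Rc * w ^ 2) ≤ 0) :
    I ((F φ) ^ 2) + I ((Hc φ) ^ 2) + I ((2 * Hc φ - (θ + c) * V φ) ^ 2) ≤ 0 := by
  subst hlam hF hHc hφ hRcdef
  have cVX : ∀ w : A, V (X w) = X (V w) + H w := fun w => by
    have h := congrArg (fun D : Derivation ℝ A A => D w) hVX
    simp only [Derivation.commutator_apply] at h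
    linear_combination h
  have cVH : ∀ w : A, V (H w) = H (V w) - X w := fun w => by
    have h := congrArg (fun D : Derivation ℝ A A => D w) hHV
    simp only [Derivation.commutator_apply] at h
    linear_combination -h
  have cHX : ∀ w : A, H (X w) = X (H w) - K * V w := fun w => by
    have h := congrArg (fun D : Derivation ℝ A A => D w) hXH
    simp only [Derivation.commutator_apply, Derivation.coe_smul, Pi.smul_apply, smul_eq_mul] at h
    linear_combination -h
  have hXθ : X θ = -H (V θ) := by linear_combination hdiv
  obtain ⟨φ', hphi⟩ : ∃ x : A, x = V (V u) + u := ⟨_, rfl⟩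
  rw [show V (V u) + u = φ' from hphi.symm]
  have happ1 : (X + V θ • V) φ' = X φ' + V θ * V φ' := by
    simp [Derivation.add_apply, Derivation.coe_smul, Pi.smul_apply, smul_eq_mul]
  have happ2 : (H + c • V) φ' = H φ' + c * V φ' := by
    simp [Derivation.add_apply, Derivation.coe_smul, Pi.smul_apply, smul_eq_mul]
  have hpu : V (V (V (X u + V θ * V u))) + 4 * V (X u + V θ * V u) = 0 := by
    have h : X u + V θ * V u = p := by
      rw [← hu]
      simp [Derivation.add_apply, Derivation.coe_smul, Pi.smul_apply, smul_eq_mul]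
    rw [h]; exact hp
  have C0 : V (X φ' + V θ * V φ') + 2 * H φ' - 2 * (θ * V φ') = 0 := by
    have lin : V (X φ' + V θ * V φ') + 2 * H φ' - 2 * (θ * V φ')
        = V (V (V (X u + V θ * V u))) + 4 * V (X u + V θ * V u) := by
      rw [hphi]
      simp only [map_add, map_sub, map_neg, Derivation.leibniz, smul_eq_mul, cVX, cVH, cHX, hθ, hXθ]
      ring
    rw [lin]; exact hpu
  have KEY : ∀ f : A,
      (X f + V θ * V f) ^ 2 + (H f + c * V f) ^ 2
        + (2 * (H f + c * V f) - (θ + c) * V f) ^ 2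
      = ((X + V θ • V) (θ + c) + (θ + 2 * c) * (θ + c) + K) * V f ^ 2
        + (- X (V f * H f) - X (c * (V f * V f)) - (X (θ * (f * V (V f))) + X (θ * (f * V (V f)))) - (X (θ * (V f * V f)) + X (θ * (V f * V f)))
        + (H (V f * X f) - (H (V θ * (f * V (V f))) + H (V θ * (f * V (V f)))) - H (V θ * (V f * V f)))
        + (- V (X f * H f) + (V (V θ * (f * V (H f))) + V (V θ * (f * V (H f)))) + (V (V θ * (f * X f)) + V (V θ * (f * X f)))
           - V (V θ * (c * (V f * V f))) + (V (θ * (f * V (X f))) + V (θ * (f * V (X f)))) - (V (θ * (f * H f)) + V (θ * (f * H f)))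
           + (V (θ * (V f * X f)) + V (θ * (V f * X f)))))
        + 2 * (H f + c * V f) * (V (X f + V θ * V f) + 2 * H f - 2 * (θ * V f)) := by
    intro f
    simp only [map_add, map_sub, map_neg, Derivation.leibniz, smul_eq_mul, Derivation.add_apply,
      Derivation.coe_smul, Pi.smul_apply, cVX, cVH, cHX, hθ, hXθ]
    ring
  have SID : (X + V θ • V) φ' ^ 2 + (H + c • V) φ' ^ 2 + (2 * (H + c • V) φ' - (θ + c) * V φ') ^ 2
      = ((X + V θ • V) (θ + c) + (θ + 2 * c) * (θ + c) + K) * V φ' ^ 2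
        + (- X (V φ' * H φ') - X (c * (V φ' * V φ')) - (X (θ * (φ' * V (V φ'))) + X (θ * (φ' * V (V φ')))) - (X (θ * (V φ' * V φ')) + X (θ * (V φ' * V φ')))
        + (H (V φ' * X φ') - (H (V θ * (φ' * V (V φ'))) + H (V θ * (φ' * V (V φ')))) - H (V θ * (V φ' * V φ')))
        + (- V (X φ' * H φ') + (V (V θ * (φ' * V (H φ'))) + V (V θ * (φ' * V (H φ')))) + (V (V θ * (φ' * X φ')) + V (V θ * (φ' * X φ')))
           - V (V θ * (c * (V φ' * V φ'))) + (V (θ * (φ' * V (X φ'))) + V (θ * (φ' * V (X φ')))) - (V (θ * (φ' * H φ')) + V (θ * (φ' * H φ')))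
           + (V (θ * (V φ' * X φ')) + V (θ * (V φ' * X φ'))))) := by
    rw [happ1, happ2]
    linear_combination KEY φ' + (2 * (H φ' + c * V φ')) * C0
  have e1 := congrArg I SID
  simp only [map_add I, map_sub I, map_neg I, hIX, hIH, hIV, add_zero, zero_add, sub_zero,
    neg_zero, zero_sub, sub_self] at e1
  rw [e1]
  exact hneg (V φ')
end

section
/- Suppose λ = V(θ) and take c = −θ. Then the commutation relations become [V,F] = H_c, [V,H_c] = −F, and [F,H_c] = −V(θ)·F + θ·H_c + (K − (X(θ) + H(V(θ))))·V. -/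
/-- for a pure Gaussian thermostat (`λ = V(θ)`,
`V(V(θ)) = −θ`) and the choice `c = −θ`, the commutation relations become
`[V,F] = H_c`, `[V,H_c] = −F`, and
`[F,H_c] = −V(θ)·F + θ·H_c + (K − (X(θ) + H(V(θ))))·V`. -/
theorem pure_thermostat_commutation_relations
    (A : Type*) [CommRing A] [Algebra ℝ A]
    (X H V : Derivation ℝ A A) (K : A)
    (hVX : ⁅V, X⁆ = H) (hHV : ⁅H, V⁆ = X) (hXH : ⁅X, H⁆ = K • V)
    (θ : A) (hθ : V (V θ) = -θ)
    (lam c : A) (hlam : lam = V θ) (hc : c = -θ)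
    (F Hc : Derivation ℝ A A)
    (hF : F = X + lam • V) (hHc : Hc = H + c • V) :
    ⁅V, F⁆ = Hc ∧
    ⁅V, Hc⁆ = -F ∧
    ⁅F, Hc⁆ = -(V θ • F) + θ • Hc + (K - (X θ + H (V θ))) • V := by
  have lsmul : ∀ (a : A) (D E : Derivation ℝ A A),
      ⁅D, a • E⁆ = D a • E + a • ⁅D, E⁆ := by
    intro a D E; ext u
    simp [Derivation.commutator_apply, smul_eq_mul]
    ring
  have rsmul : ∀ (a : A) (D E : Derivation ℝ A A),
      ⁅a • D, E⁆ = a • ⁅D, E⁆ - E a • D := by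
    intro a D E; ext u
    simp [Derivation.commutator_apply, smul_eq_mul]
    ring
  have hVH : ⁅V, H⁆ = -X := by rw [← hHV, ← lie_skew]
  have hXV : ⁅X, V⁆ = -H := by rw [← hVX, ← lie_skew]
  subst hlam hc hF hHc
  refine ⟨?_, ?_, ?_⟩
  · rw [lie_add, hVX, lsmul, lie_self, smul_zero, add_zero, hθ]
  · rw [lie_add, hVH, lsmul, lie_self, smul_zero, add_zero, map_neg]
    module
  · rw [add_lie, lie_add, lie_add, hXH, lsmul, lsmul, rsmul, rsmul,
      lie_self, hVH, hXV, map_neg, map_neg, hθ]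
    simp only [smul_zero, add_zero, smul_neg, neg_neg, smul_smul, smul_add,
      Derivation.smul_apply, smul_eq_mul]
    module
end

section
/- Suppose λ = V(θ), X(θ) + H(V(θ)) = 0, and c = −θ. Let u, p ∈ A satisfy F(u) = p and V(V(V(p))) + 4·V(p) = 0, and set φ = V(V(u)) + u. Then −5·I((H_c(φ))²) = I((F(φ))²) − I(K·(V(φ))²). -/
/-- the alternative identity towards Theorem B: for a pure
Gaussian thermostat with divergence-free external field and the choice
`c = −θ`, if `F(u) = p`, `V³p + 4Vp = 0` and `φ = V²u + u`, then
`−5·I((H_c φ)²) = I((F φ)²) − I(K·(V φ)²)`. -/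
theorem alternative_pestov_identity
    (A : Type*) [CommRing A] [Algebra ℝ A]
    (X H V : Derivation ℝ A A) (K : A)
    (hVX : ⁅V, X⁆ = H) (hHV : ⁅H, V⁆ = X) (hXH : ⁅X, H⁆ = K • V)
    (θ : A) (hθ : V (V θ) = -θ) (hdiv : X θ + H (V θ) = 0)
    (lam c : A) (hlam : lam = V θ) (hc : c = -θ)
    (F Hc : Derivation ℝ A A)
    (hF : F = X + lam • V) (hHc : Hc = H + c • V)
    (I : A →ₗ[ℝ] ℝ)
    (hIX : ∀ a : A, I (X a) = 0) (hIH : ∀ a : A, I (H a) = 0)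
    (hIV : ∀ a : A, I (V a) = 0)
    (u p : A) (hu : F u = p) (hp : V (V (V p)) + 4 * V p = 0)
    (φ : A) (hφ : φ = V (V u) + u) :
    -5 * I ((Hc φ) ^ 2) = I ((F φ) ^ 2) - I (K * (V φ) ^ 2) := by
  -- Leibniz rule in multiplicative form
  have leib : ∀ (D : Derivation ℝ A A) (x y : A), D (x * y) = x * D y + D x * y := by
    intro D x y
    have := D.leibniz x y
    simp only [smul_eq_mul] at this
    rw [this]; ring
  -- basic derivative facts
  have hVlam : V lam = c := by rw [hlam, hθ, hc]
  have hVc : V c = -lam := by rw [hc, hlam, map_neg]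
  have hdiff : X c = H lam := by
    rw [hc, hlam, map_neg]
    linear_combination -hdiv
  -- pointwise applications
  have hFapp : ∀ x, F x = X x + lam * V x := by
    intro x; rw [hF]; simp [Derivation.add_apply, Derivation.smul_apply, smul_eq_mul]
  have hHcapp : ∀ x, Hc x = H x + c * V x := by
    intro x; rw [hHc]; simp [Derivation.add_apply, Derivation.smul_apply, smul_eq_mul]
  -- commutator facts pointwise
  have cVX : ∀ x, V (X x) = X (V x) + H x := by
    intro x
    have h := congrArg (fun D : Derivation ℝ A A => D x) hVX
    simp only [Derivation.commutator_apply] at h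
    linear_combination h
  have cHV : ∀ x, H (V x) = V (H x) + X x := by
    intro x
    have h := congrArg (fun D : Derivation ℝ A A => D x) hHV
    simp only [Derivation.commutator_apply] at h
    linear_combination h
  have cXH : ∀ x, X (H x) = H (X x) + K * V x := by
    intro x
    have h := congrArg (fun D : Derivation ℝ A A => D x) hXH
    simp only [Derivation.commutator_apply, Derivation.smul_apply, smul_eq_mul] at h
    linear_combination h
  -- commutators with F and Hc
  have comm1 : ∀ x, F (V x) = V (F x) - Hc x := by
    intro x
    rw [hFapp, hFapp, hHcapp, map_add, leib V lam (V x), hVlam]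
    linear_combination -(cVX x)
  have comm2 : ∀ x, Hc (V x) = V (Hc x) + F x := by
    intro x
    rw [hHcapp, hHcapp, hFapp, map_add, leib V c (V x), hVc]
    linear_combination cHV x
  have comm3 : ∀ x, F (Hc x) - Hc (F x) = K * V x - lam * F x - c * Hc x := by
    intro x
    rw [hFapp (Hc x), hHcapp (F x), hHcapp x, hFapp x, map_add, map_add, map_add, map_add,
      leib X c (V x), leib V c (V x), leib H lam (V x), leib V lam (V x), hVlam, hVc]
    linear_combination cXH x + (V x) * hdiff - c * (cVX x) - lam * (cHV x)
  -- integral rules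
  have IF : ∀ z, I (F z) = -I (c * z) := by
    intro z
    have h1 : F z = X z + (V (lam * z) - c * z) := by
      rw [hFapp, leib V lam z, hVlam]; ring
    rw [h1, map_add, map_sub, hIX, hIV]; ring
  have IHc : ∀ z, I (Hc z) = I (lam * z) := by
    intro z
    have h1 : Hc z = H z + (V (c * z) + lam * z) := by
      rw [hHcapp, leib V c z, hVc]; ring
    rw [h1, map_add, map_add, hIH, hIV]; ring
  have ibpV : ∀ x y : A, I (x * V y) = -I (V x * y) := by
    intro x y
    have h := hIV (x * y)
    rw [leib V x y, map_add] at h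
    linarith
  -- the key computations for φ
  set q : A := Hc u with hqdef
  have hFVu : F (V u) = V p - q := by rw [comm1, hu]
  have hHcVu : Hc (V u) = V q + p := by rw [comm2, hu]
  have ha : F φ = V (V p) - (V q + V q) := by
    rw [hφ, map_add, hu, comm1 (V u), hFVu, hHcVu, map_sub]
    ring
  have hb : Hc φ = V (V q) + (V p + V p) := by
    rw [hφ, map_add, comm2 (V u), hHcVu, hFVu, map_add]
    ring
  have hVa : V (F φ) = -(2 * Hc φ) := by
    rw [ha, hb, map_sub, map_add]
    linear_combination hp
  have hFw : F (V φ) = -(3 * Hc φ) := by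
    rw [comm1 φ, hVa]; ring
  have hHcw : Hc (V φ) = V (Hc φ) + F φ := comm2 φ
  -- abbreviations
  set a : A := F φ with hadef
  set b : A := Hc φ with hbdef
  set w : A := V φ with hwdef
  -- I (a * V b) = 2 I (b*b)
  have e1 : I (a * V b) = 2 * I (b * b) := by
    rw [ibpV a b, ← hwdef] at *
    rw [show V a = -(2*b) from hVa]
    rw [show -(2*b) * b = -(b*b) - (b*b) by ring, map_sub, map_neg]
    ring
  -- I (F b * w)
  have e2 : I (F b * w) = -I (c * (b * w)) + 3 * I (b * b) := by
    have h1 : F (b * w) = b * F w + F b * w := leib F b w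
    have h2 := congrArg I h1
    rw [IF (b * w)] at h2
    rw [show b * F w = -(b*b) - (b*b) - (b*b) by rw [hwdef, hFw]; ring] at h2
    rw [map_add, map_sub, map_sub, map_neg] at h2
    linarith
  -- I (Hc a * w)
  have e3 : I (Hc a * w) = I (lam * (a * w)) - 2 * I (b * b) - I (a * a) := by
    have h1 : Hc (a * w) = a * Hc w + Hc a * w := leib Hc a w
    have h2 := congrArg I h1
    rw [IHc (a * w)] at h2
    rw [show a * Hc w = a * V b + a * a by rw [hwdef, hHcw]; ring] at h2
    rw [map_add, map_add, e1] at h2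
    linarith
  -- the commutator identity at φ, multiplied by w and integrated
  have h3 := comm3 φ
  have h4 : I ((F b - Hc a) * w) = I ((K * w - lam * a - c * b) * w) := by
    rw [h3]
  rw [show (F b - Hc a) * w = F b * w - Hc a * w by ring, map_sub,
    show (K * w - lam * a - c * b) * w = K * (w * w) - lam * (a * w) - c * (b * w) by ring,
    map_sub, map_sub] at h4
  rw [e2, e3] at h4
  have hgoal1 : I (K * (w * w)) = I (a * a) + 5 * I (b * b) := by linarith
  rw [show (Hc φ)^2 = b * b by rw [hbdef]; ring,
    show (F φ)^2 = a * a by rw [hadef]; ring,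
    show K * (V φ)^2 = K * (w * w) by rw [hwdef]; ring, hgoal1]
  ring
end
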